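/- Let K be an irreducible, aperiodic, substochastic kernel on a countable state space S with spectral radius ρ. If for some x ∈ S there is a probability measure π_x on S with K^n(x,y)/K^n(x,S) → π_x(y) for all y ∈ S, then for every y ∈ S, K^{n+1}(x,y)/K^n(x,y) → ρ. -/

import Mathlib

open Filter Topology

open scoped Classical in
/-- Matrix powers of a kernel `K` on a countable state space. -/
noncomputable def Kpow {S : Type*} (K : S → S → ℝ) : ℕ → S → S → ℝ
  | 0 => fun x y => if x = y then 1 else 0
  | n + 1 => fun x y => ∑' z, Kpow K n x z * K z y

/-!
Write `a n = K^n(x, S)`. Since `ρ > 0`, every entry `K^n(u, v)` is eventually positive, and for a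
state `y₀` with `π y₀ > 0` the Yaglom limit makes `a n` comparable to `K^n(x, y₀)`, so
`a n ^ (1/n) → ρ`. The bound `K(z, S) ≤ 1` says nothing about a non-summable row, whose `tsum`
is `0`; but such a row would let `a` grow by an arbitrarily large factor every `m + 1` steps (walk
from `y₀` to `z` in `m` steps, then take one more), which is impossible when `a n ^ (1/n) → ρ`.
With summable rows, `a (n+1) = ∑ z, K^n(x, z) K(z, S)`, so Scheffé's lemma gives
`a (n+1) / a n → ∑ z, π z K(z, S)`, and a ratio limit must agree with the root limit `ρ`.
Every `π y` is positive (walk from `y₀` to `y`), and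
`K^{n+1}(x,y) / K^n(x,y) = (K^{n+1}(x,y) / a (n+1)) · (a (n+1) / a n) / (K^n(x,y) / a n) → ρ`.
-/

theorem Summable.of_tsum_ne_zero {ι α : Type*} [AddCommMonoid α] [TopologicalSpace α]
    {f : ι → α} (h : ∑' i, f i ≠ 0) : Summable f := by
  by_contra hf
  exact h (tsum_eq_zero_of_not_summable hf)

theorem exists_pos_of_tsum_pos {ι : Type*} {f : ι → ℝ} (h : 0 < ∑' i, f i) : ∃ i, 0 < f i := by
  by_contra! hf
  exact h.not_ge (tsum_nonpos hf)

theorem Summable.mul_of_nonneg_of_le_one {ι : Type*} {f g : ι → ℝ} (hf : Summable f)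
    (hf0 : ∀ i, 0 ≤ f i) (hg0 : ∀ i, 0 ≤ g i) (hg1 : ∀ i, g i ≤ 1) :
    Summable fun i => f i * g i :=
  hf.of_nonneg_of_le (fun i => mul_nonneg (hf0 i) (hg0 i))
    (fun i => mul_le_of_le_one_right (hf0 i) (hg1 i))

theorem eventually_lt_tsum_of_tendsto {α ι : Type*} {l : Filter α} {f : α → ι → ℝ}
    {g : ι → ℝ} (hf : ∀ a i, 0 ≤ f a i) (hfs : ∀ a, Summable (f a)) (hg : Summable g)
    (hlim : ∀ i, Tendsto (fun a => f a i) l (𝓝 (g i))) {b : ℝ} (hb : b < ∑' i, g i) :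
    ∀ᶠ a in l, b < ∑' i, f a i := by
  obtain ⟨F, hF⟩ := (hg.hasSum.eventually (eventually_gt_nhds hb)).exists
  filter_upwards [(tendsto_finsetSum F fun i _ => hlim i).eventually (eventually_gt_nhds hF)]
    with a ha
  exact ha.trans_le ((hfs a).sum_le_tsum F fun i _ => hf a i)

theorem tsum_mul_one_sub {ι : Type*} {q g : ι → ℝ} (hq : ∀ i, 0 ≤ q i) (hq1 : ∑' i, q i = 1)
    (hg0 : ∀ i, 0 ≤ g i) (hg1 : ∀ i, g i ≤ 1) :
    ∑' i, q i * (1 - g i) = 1 - ∑' i, q i * g i := by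
  have hqs : Summable q := .of_tsum_ne_zero (hq1 ▸ one_ne_zero)
  simp_rw [mul_one_sub]
  rw [hqs.tsum_sub (hqs.mul_of_nonneg_of_le_one hq hg0 hg1), hq1]

/-- Scheffé's lemma for probability vectors. -/
theorem tendsto_tsum_mul_of_tendsto {α ι : Type*} {l : Filter α} {φ : α → ι → ℝ}
    {p g : ι → ℝ} (hφ : ∀ a i, 0 ≤ φ a i) (hφ1 : ∀ a, ∑' i, φ a i = 1) (hp : ∀ i, 0 ≤ p i)
    (hp1 : ∑' i, p i = 1) (hg0 : ∀ i, 0 ≤ g i) (hg1 : ∀ i, g i ≤ 1)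
    (hlim : ∀ i, Tendsto (fun a => φ a i) l (𝓝 (p i))) :
    Tendsto (fun a => ∑' i, φ a i * g i) l (𝓝 (∑' i, p i * g i)) := by
  have hφs : ∀ a, Summable (φ a) := fun a => .of_tsum_ne_zero ((hφ1 a).symm ▸ one_ne_zero)
  have hps : Summable p := .of_tsum_ne_zero (hp1 ▸ one_ne_zero)
  have hg1' : ∀ i, 0 ≤ 1 - g i := fun i => sub_nonneg.2 (hg1 i)
  have hg0' : ∀ i, 1 - g i ≤ 1 := fun i => sub_le_self 1 (hg0 i)
  refine tendsto_order.2 ⟨fun b hb => ?_, fun b hb => ?_⟩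
  · exact eventually_lt_tsum_of_tendsto (fun a i => mul_nonneg (hφ a i) (hg0 i))
      (fun a => (hφs a).mul_of_nonneg_of_le_one (hφ a) hg0 hg1)
      (hps.mul_of_nonneg_of_le_one hp hg0 hg1) (fun i => (hlim i).mul_const _) hb
  · have hb' : 1 - b < ∑' i, p i * (1 - g i) := by
      rw [tsum_mul_one_sub hp hp1 hg0 hg1]
      linarith
    filter_upwards [eventually_lt_tsum_of_tendsto (fun a i => mul_nonneg (hφ a i) (hg1' i))
      (fun a => (hφs a).mul_of_nonneg_of_le_one (hφ a) hg1' hg0')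
      (hps.mul_of_nonneg_of_le_one hp hg1' hg0') (fun i => (hlim i).mul_const _) hb'] with a ha
    rw [tsum_mul_one_sub (hφ a) (hφ1 a) hg0 hg1] at ha
    linarith

theorem le_mul_of_eventually_add_le {u : ℕ → ℝ} {L c : ℝ} {q : ℕ} (hq : 0 < q)
    (hu : Tendsto (fun n : ℕ => u n / n) atTop (𝓝 L))
    (h : ∀ᶠ n in atTop, u n + c ≤ u (n + q)) : c ≤ q * L := by
  obtain ⟨N, hN⟩ := eventually_atTop.1 h
  have hiter : ∀ k : ℕ, u N + k * c ≤ u (N + k * q) := by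
    intro k
    induction k with
    | zero => simp
    | succ k ih =>
      have := hN (N + k * q) (Nat.le_add_right _ _)
      rw [show N + (k + 1) * q = N + k * q + q by ring]
      push_cast
      linarith
  have hsub : Tendsto (fun k : ℕ => N + k * q) atTop atTop :=
    tendsto_atTop_mono (fun k => le_add_left (Nat.le_mul_of_pos_right k hq)) tendsto_id
  have hupper : Tendsto (fun k : ℕ => u (N + k * q) / (N + k * q : ℕ) * ((N : ℝ) / k + q))
      atTop (𝓝 (L * q)) :=
    (hu.comp hsub).mul <| by
      simpa using (tendsto_const_div_atTop_nhds_zero_nat (N : ℝ)).add_const (q : ℝ)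
  have hlower : Tendsto (fun k : ℕ => u N / k + c) atTop (𝓝 c) := by
    simpa using (tendsto_const_div_atTop_nhds_zero_nat (u N)).add_const c
  rw [mul_comm]
  refine le_of_tendsto_of_tendsto hlower hupper ?_
  filter_upwards [eventually_gt_atTop 0] with k hk
  have hNk : (0 : ℝ) < ((N + k * q : ℕ) : ℝ) := by positivity
  calc u N / k + c = (u N + k * c) / k := by field_simp
    _ ≤ u (N + k * q) / k := by gcongr; exact hiter k
    _ = u (N + k * q) / (N + k * q : ℕ) * ((N : ℝ) / k + q) := by
      push_cast at hNk ⊢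
      field_simp

theorem tendsto_log_div_of_tendsto_rpow_inv {a : ℕ → ℝ} {ρ : ℝ} (ha : ∀ᶠ n in atTop, 0 < a n)
    (hρ : 0 < ρ) (hroot : Tendsto (fun n : ℕ => a n ^ (n : ℝ)⁻¹) atTop (𝓝 ρ)) :
    Tendsto (fun n : ℕ => Real.log (a n) / n) atTop (𝓝 (Real.log ρ)) := by
  refine ((Real.continuousAt_log hρ.ne').tendsto.comp hroot).congr' ?_
  filter_upwards [ha] with n hn
  simp [Real.log_rpow hn, div_eq_inv_mul]

section RootGrowth

variable {a : ℕ → ℝ} {ρ B : ℝ} {q : ℕ}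

theorem le_pow_of_eventually_mul_le (ha : ∀ᶠ n in atTop, 0 < a n) (hρ : 0 < ρ)
    (hroot : Tendsto (fun n : ℕ => a n ^ (n : ℝ)⁻¹) atTop (𝓝 ρ)) (hq : 0 < q)
    (h : ∀ᶠ n in atTop, B * a n ≤ a (n + q)) : B ≤ ρ ^ q := by
  rcases le_or_gt B 0 with hB | hB
  · exact hB.trans (by positivity)
  rw [← Real.log_le_log_iff hB (by positivity), Real.log_pow]
  refine le_mul_of_eventually_add_le hq (tendsto_log_div_of_tendsto_rpow_inv ha hρ hroot) ?_
  filter_upwards [ha, h] with n hn hle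
  rw [add_comm, ← Real.log_mul hB.ne' hn.ne']
  exact Real.log_le_log (by positivity) hle

theorem pow_le_of_eventually_le_mul (ha : ∀ᶠ n in atTop, 0 < a n) (hρ : 0 < ρ)
    (hroot : Tendsto (fun n : ℕ => a n ^ (n : ℝ)⁻¹) atTop (𝓝 ρ)) (hq : 0 < q)
    (h : ∀ᶠ n in atTop, a (n + q) ≤ B * a n) : ρ ^ q ≤ B := by
  have haq := (tendsto_add_atTop_nat q).eventually ha
  obtain ⟨n, hn, hnq, hle⟩ := (ha.and (haq.and h)).exists
  have hB : 0 < B := pos_of_mul_pos_left (hnq.trans_le hle) hn.le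
  rw [← Real.log_le_log_iff (by positivity) hB, Real.log_pow]
  have hlog : Tendsto (fun n : ℕ => -Real.log (a n) / n) atTop (𝓝 (-Real.log ρ)) := by
    simpa only [neg_div] using (tendsto_log_div_of_tendsto_rpow_inv ha hρ hroot).neg
  have hneg := le_mul_of_eventually_add_le (c := -Real.log B) hq hlog ?_
  · linarith
  filter_upwards [ha, haq, h] with n hn hnq hle
  have := Real.log_le_log hnq hle
  rw [Real.log_mul hB.ne' hn.ne'] at this
  linarith

theorem eq_of_tendsto_succ_div_of_tendsto_rpow_inv {α : ℝ} (ha : ∀ᶠ n in atTop, 0 < a n)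
    (hρ : 0 < ρ) (hroot : Tendsto (fun n : ℕ => a n ^ (n : ℝ)⁻¹) atTop (𝓝 ρ))
    (hratio : Tendsto (fun n => a (n + 1) / a n) atTop (𝓝 α)) : α = ρ := by
  refine le_antisymm (le_of_not_gt fun hlt => ?_) (le_of_not_gt fun hlt => ?_)
  · obtain ⟨B, hρB, hBα⟩ := exists_between hlt
    have hB : B ≤ ρ ^ 1 := le_pow_of_eventually_mul_le ha hρ hroot one_pos <| by
      filter_upwards [ha, hratio.eventually (eventually_gt_nhds hBα)] with n hn hgt
      exact ((lt_div_iff₀ hn).1 hgt).le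
    linarith [pow_one ρ]
  · obtain ⟨B, hαB, hBρ⟩ := exists_between hlt
    have hB : ρ ^ 1 ≤ B := pow_le_of_eventually_le_mul ha hρ hroot one_pos <| by
      filter_upwards [ha, hratio.eventually (eventually_lt_nhds hαB)] with n hn hlt
      exact ((div_lt_iff₀ hn).1 hlt).le
    linarith [pow_one ρ]

end RootGrowth

theorem eventually_pos_of_tendsto_rpow_inv {b : ℕ → ℝ} {ρ : ℝ} (hb : ∀ n, 0 ≤ b n) (hρ : 0 < ρ)
    (hroot : Tendsto (fun n : ℕ => b n ^ (n : ℝ)⁻¹) atTop (𝓝 ρ)) : ∀ᶠ n in atTop, 0 < b n := by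
  filter_upwards [hroot.eventually (eventually_gt_nhds hρ), eventually_ne_atTop 0] with n hpos hn
  refine (hb n).lt_of_ne fun h0 => ?_
  rw [← h0, Real.zero_rpow (by positivity)] at hpos
  exact hpos.false

theorem eventually_pos_and_mul_le_of_tendsto_div {a b : ℕ → ℝ} {p c : ℝ} (ha : ∀ n, 0 ≤ a n)
    (hc : 0 < c) (hcp : c < p) (hdiv : Tendsto (fun n => b n / a n) atTop (𝓝 p)) :
    ∀ᶠ n in atTop, 0 < a n ∧ c * a n ≤ b n := by
  filter_upwards [hdiv.eventually (eventually_gt_nhds hcp)] with n hn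
  have han : 0 < a n := (ha n).lt_of_ne fun h0 => by
    rw [← h0, div_zero] at hn
    linarith
  exact ⟨han, ((lt_div_iff₀ han).1 hn).le⟩

theorem tendsto_rpow_inv_of_tendsto_div {a b : ℕ → ℝ} {p ρ : ℝ} (ha : ∀ n, 0 ≤ a n)
    (hb : ∀ n, 0 ≤ b n) (hp : 0 < p) (hdiv : Tendsto (fun n => b n / a n) atTop (𝓝 p))
    (hroot : Tendsto (fun n : ℕ => b n ^ (n : ℝ)⁻¹) atTop (𝓝 ρ)) :
    Tendsto (fun n : ℕ => a n ^ (n : ℝ)⁻¹) atTop (𝓝 ρ) := by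
  have hone : Tendsto (fun n : ℕ => (b n / a n) ^ (n : ℝ)⁻¹) atTop (𝓝 1) := by
    simpa using hdiv.rpow tendsto_inv_atTop_nhds_zero_nat (Or.inl hp.ne')
  have hquot : Tendsto (fun n : ℕ => b n ^ (n : ℝ)⁻¹ / (b n / a n) ^ (n : ℝ)⁻¹) atTop (𝓝 ρ) := by
    rw [← div_one ρ]
    exact hroot.div hone one_ne_zero
  refine hquot.congr' ?_
  filter_upwards [eventually_pos_and_mul_le_of_tendsto_div ha (half_pos hp) (half_lt_self hp) hdiv]
    with n ⟨han, hle⟩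
  have hbn : 0 < b n := (mul_pos (half_pos hp) han).trans_le hle
  rw [Real.div_rpow (hb n) (ha n), div_div_cancel₀ (Real.rpow_pos_of_pos hbn _).ne']

theorem tendsto_succ_div_of_tendsto_div {a b : ℕ → ℝ} {p r : ℝ} (hp : p ≠ 0)
    (hdiv : Tendsto (fun n => b n / a n) atTop (𝓝 p))
    (hratio : Tendsto (fun n => a (n + 1) / a n) atTop (𝓝 r)) :
    Tendsto (fun n => b (n + 1) / b n) atTop (𝓝 r) := by
  have hlim := (((hdiv.comp (tendsto_add_atTop_nat 1)).mul hratio).div hdiv hp)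
  rw [mul_div_cancel_left₀ r hp] at hlim
  refine hlim.congr' ?_
  have hne := hdiv.eventually_ne hp
  filter_upwards [hne, (tendsto_add_atTop_nat 1).eventually hne] with n hn hn1
  obtain ⟨hbn, han⟩ := div_ne_zero_iff.1 hn
  have han1 := (div_ne_zero_iff.1 hn1).2
  simp only [Pi.div_apply, Function.comp]
  field_simp

section Kernel

variable {S : Type*} {K : S → S → ℝ}

theorem Kpow_nonneg (hnn : ∀ x y, 0 ≤ K x y) (n : ℕ) (u v : S) : 0 ≤ Kpow K n u v := by
  induction n generalizing v with
  | zero => simp only [Kpow]; split_ifs <;> norm_num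
  | succ n ih => exact tsum_nonneg fun z => mul_nonneg (ih z) (hnn z v)

/-- `Kpow` is defined by `tsum`, so Chapman–Kolmogorov is only available where the defining
series is known to be summable; a positive value guarantees that. -/
theorem mul_le_Kpow_succ (hnn : ∀ x y, 0 ≤ K x y) {n : ℕ} {u v : S}
    (h : 0 < Kpow K (n + 1) u v) (w : S) : Kpow K n u w * K w v ≤ Kpow K (n + 1) u v :=
  (Summable.of_tsum_ne_zero h.ne').le_tsum w fun z _ => mul_nonneg (Kpow_nonneg hnn n u z) (hnn z v)

theorem exists_Kpow_pos_and_pos_of_Kpow_succ_pos (hnn : ∀ x y, 0 ≤ K x y) {n : ℕ} {u v : S}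
    (h : 0 < Kpow K (n + 1) u v) : ∃ w, 0 < Kpow K n u w ∧ 0 < K w v := by
  obtain ⟨w, hw⟩ := exists_pos_of_tsum_pos h
  exact ⟨w, pos_of_mul_pos_left hw (hnn w v), pos_of_mul_pos_right hw (Kpow_nonneg hnn n u w)⟩

theorem exists_pos_mul_le_Kpow_add (hnn : ∀ x y, 0 ≤ K x y) {x : S}
    (hx : ∀ w, ∀ᶠ n in atTop, 0 < Kpow K n x w) {m : ℕ} {u v : S} (h : 0 < Kpow K m u v) :
    ∃ P > 0, ∀ᶠ n in atTop, P * Kpow K n x u ≤ Kpow K (n + m) x v := by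
  induction m generalizing v with
  | zero =>
    have huv : u = v := by
      by_contra huv
      simp [Kpow, huv] at h
    exact ⟨1, one_pos, .of_forall fun n => by simp [huv]⟩
  | succ m ih =>
    obtain ⟨w, hw, hKw⟩ := exists_Kpow_pos_and_pos_of_Kpow_succ_pos hnn h
    obtain ⟨P, hP, hPw⟩ := ih hw
    refine ⟨P * K w v, mul_pos hP hKw, ?_⟩
    filter_upwards [hPw, (tendsto_add_atTop_nat (m + 1)).eventually (hx v)] with n hn hpos
    calc P * K w v * Kpow K n x u = P * Kpow K n x u * K w v := by ring
      _ ≤ Kpow K (n + m) x w * K w v := by gcongr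
      _ ≤ Kpow K (n + (m + 1)) x v := mul_le_Kpow_succ hnn hpos w

theorem summable_row_of_tendsto_rpow_inv (hnn : ∀ x y, 0 ≤ K x y)
    (hev : ∀ u v, ∀ᶠ n in atTop, 0 < Kpow K n u v) {x y₀ : S} {ρ c : ℝ} (hρ : 0 < ρ)
    (hc : 0 < c) (hpos : ∀ᶠ n in atTop, 0 < ∑' z, Kpow K n x z)
    (hroot : Tendsto (fun n : ℕ => (∑' z, Kpow K n x z) ^ (n : ℝ)⁻¹) atTop (𝓝 ρ))
    (hdom : ∀ᶠ n in atTop, c * ∑' z, Kpow K n x z ≤ Kpow K n x y₀) (z : S) :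
    Summable (K z) := by
  obtain ⟨m, hm⟩ := (hev y₀ z).exists
  obtain ⟨P, hP, hchain⟩ := exists_pos_mul_le_Kpow_add hnn (hev x) hm
  refine summable_of_sum_le (hnn z) (c := ρ ^ (m + 1) / (c * P)) fun G => ?_
  rw [le_div_iff₀ (by positivity)]
  refine le_pow_of_eventually_mul_le hpos hρ hroot m.succ_pos ?_
  have hGpos : ∀ᶠ n in atTop, ∀ y ∈ G, 0 < Kpow K (n + m + 1) x y := by
    rw [eventually_all_finset]
    exact fun y _ => (tendsto_add_atTop_nat (m + 1)).eventually (hev x y)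
  have hG : 0 ≤ ∑ y ∈ G, K z y := Finset.sum_nonneg fun y _ => hnn z y
  filter_upwards [hdom, hchain, hGpos, (tendsto_add_atTop_nat (m + 1)).eventually hpos]
    with n hn hPn hGn hmass
  calc (∑ y ∈ G, K z y) * (c * P) * ∑' w, Kpow K n x w
      = P * (c * ∑' w, Kpow K n x w) * ∑ y ∈ G, K z y := by ring
    _ ≤ P * Kpow K n x y₀ * ∑ y ∈ G, K z y := by gcongr
    _ ≤ Kpow K (n + m) x z * ∑ y ∈ G, K z y := by gcongr
    _ = ∑ y ∈ G, Kpow K (n + m) x z * K z y := Finset.mul_sum _ _ _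
    _ ≤ ∑ y ∈ G, Kpow K (n + m + 1) x y :=
      Finset.sum_le_sum fun y hy => mul_le_Kpow_succ hnn (hGn y hy) z
    _ ≤ ∑' y, Kpow K (n + (m + 1)) x y :=
      (Summable.of_tsum_ne_zero hmass.ne').sum_le_tsum G fun y _ => Kpow_nonneg hnn _ x y

theorem summable_mul_kernel (hnn : ∀ x y, 0 ≤ K x y) (hrow : ∀ z, Summable (K z))
    (hsub : ∀ z, ∑' y, K z y ≤ 1) {μ : S → ℝ} (hμ : ∀ z, 0 ≤ μ z) (hμs : Summable μ) :
    Summable fun p : S × S => μ p.1 * K p.1 p.2 := by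
  refine (summable_prod_of_nonneg fun p => mul_nonneg (hμ p.1) (hnn p.1 p.2)).2
    ⟨fun z => (hrow z).mul_left (μ z), ?_⟩
  simp_rw [tsum_mul_left]
  exact hμs.mul_of_nonneg_of_le_one hμ (fun z => tsum_nonneg (hnn z)) hsub

theorem tsum_tsum_mul_kernel (hnn : ∀ x y, 0 ≤ K x y) (hrow : ∀ z, Summable (K z))
    (hsub : ∀ z, ∑' y, K z y ≤ 1) {μ : S → ℝ} (hμ : ∀ z, 0 ≤ μ z) (hμs : Summable μ) :
    ∑' y, ∑' z, μ z * K z y = ∑' z, μ z * ∑' y, K z y := by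
  rw [(summable_mul_kernel hnn hrow hsub hμ hμs).tsum_comm]
  simp_rw [tsum_mul_left]

theorem summable_Kpow (hnn : ∀ x y, 0 ≤ K x y) (hrow : ∀ z, Summable (K z))
    (hsub : ∀ z, ∑' y, K z y ≤ 1) (n : ℕ) (x : S) : Summable (Kpow K n x) := by
  induction n with
  | zero => exact summable_of_ne_finset_zero (s := {x}) fun y hy => by simp_all [Kpow, eq_comm]
  | succ n ih => exact (summable_mul_kernel hnn hrow hsub (Kpow_nonneg hnn n x) ih).prod_symm.prod

theorem tsum_Kpow_succ (hnn : ∀ x y, 0 ≤ K x y) (hrow : ∀ z, Summable (K z))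
    (hsub : ∀ z, ∑' y, K z y ≤ 1) (n : ℕ) (x : S) :
    ∑' y, Kpow K (n + 1) x y = ∑' z, Kpow K n x z * ∑' y, K z y :=
  tsum_tsum_mul_kernel hnn hrow hsub (Kpow_nonneg hnn n x) (summable_Kpow hnn hrow hsub n x)

theorem antitone_tsum_Kpow (hnn : ∀ x y, 0 ≤ K x y) (hrow : ∀ z, Summable (K z))
    (hsub : ∀ z, ∑' y, K z y ≤ 1) (x : S) : Antitone fun n => ∑' y, Kpow K n x y := by
  refine antitone_nat_of_succ_le fun n => ?_
  rw [tsum_Kpow_succ hnn hrow hsub]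
  exact ((summable_Kpow hnn hrow hsub n x).mul_of_nonneg_of_le_one (Kpow_nonneg hnn n x)
    (fun z => tsum_nonneg (hnn z)) hsub).tsum_le_tsum
    (fun z => mul_le_of_le_one_right (Kpow_nonneg hnn n x z) (hsub z))
    (summable_Kpow hnn hrow hsub n x)

theorem tendsto_tsum_Kpow_succ_div (hnn : ∀ x y, 0 ≤ K x y) (hrow : ∀ z, Summable (K z))
    (hsub : ∀ z, ∑' y, K z y ≤ 1) {x : S} {π : S → ℝ} (hpos : ∀ n, 0 < ∑' z, Kpow K n x z)
    (hπ : ∀ y, 0 ≤ π y) (hπ1 : ∑' y, π y = 1)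
    (hyag : ∀ y, Tendsto (fun n => Kpow K n x y / ∑' z, Kpow K n x z) atTop (𝓝 (π y))) :
    Tendsto (fun n => (∑' z, Kpow K (n + 1) x z) / ∑' z, Kpow K n x z) atTop
      (𝓝 (∑' z, π z * ∑' y, K z y)) := by
  refine (tendsto_tsum_mul_of_tendsto (fun n z => div_nonneg (Kpow_nonneg hnn n x z) (hpos n).le)
    (fun n => ?_) hπ hπ1 (fun z => tsum_nonneg (hnn z)) hsub hyag).congr fun n => ?_
  · rw [tsum_div_const, div_self (hpos n).ne']
  · rw [tsum_Kpow_succ hnn hrow hsub, ← tsum_div_const]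
    exact tsum_congr fun z => div_mul_eq_mul_div _ _ _

theorem pos_of_tendsto_Kpow_div (hnn : ∀ x y, 0 ≤ K x y) (hrow : ∀ z, Summable (K z))
    (hsub : ∀ z, ∑' y, K z y ≤ 1) (hev : ∀ u v, ∀ᶠ n in atTop, 0 < Kpow K n u v)
    {x y₀ : S} {π : S → ℝ} (hpos : ∀ n, 0 < ∑' z, Kpow K n x z)
    (hyag : ∀ y, Tendsto (fun n => Kpow K n x y / ∑' z, Kpow K n x z) atTop (𝓝 (π y)))
    (hy₀ : 0 < π y₀) (y : S) : 0 < π y := by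
  obtain ⟨m, hm⟩ := (hev y₀ y).exists
  obtain ⟨P, hP, hchain⟩ := exists_pos_mul_le_Kpow_add hnn (hev x) hm
  refine (mul_pos hP hy₀).trans_le (le_of_tendsto_of_tendsto ((hyag y₀).const_mul P)
    ((hyag y).comp (tendsto_add_atTop_nat m)) ?_)
  filter_upwards [hchain] with n hn
  calc P * (Kpow K n x y₀ / ∑' z, Kpow K n x z) = P * Kpow K n x y₀ / ∑' z, Kpow K n x z :=
        (mul_div_assoc _ _ _).symm
    _ ≤ Kpow K (n + m) x y / ∑' z, Kpow K n x z := div_le_div_of_nonneg_right hn (hpos n).le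
    _ ≤ Kpow K (n + m) x y / ∑' z, Kpow K (n + m) x z :=
      div_le_div_of_nonneg_left (Kpow_nonneg hnn _ x y) (hpos _)
        (antitone_tsum_Kpow hnn hrow hsub x (Nat.le_add_right n m))

end Kernel

theorem yaglom_pointwise_ratio_general {S : Type*} (K : S → S → ℝ)
    (hnn : ∀ x y, 0 ≤ K x y)
    (hsub : ∀ x, ∑' y, K x y ≤ 1)
    (ρ : ℝ) (hρpos : 0 < ρ)
    (hρ : ∀ x y : S,
      Tendsto (fun n : ℕ => (Kpow K n x y) ^ ((n : ℝ)⁻¹)) atTop (𝓝 ρ))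
    (x : S) (π : S → ℝ) (hπnn : ∀ y, 0 ≤ π y) (hπ1 : ∑' y, π y = 1)
    (hyag : ∀ y : S,
      Tendsto (fun n : ℕ => Kpow K n x y / ∑' z, Kpow K n x z) atTop (𝓝 (π y))) :
    ∀ y : S,
      Tendsto (fun n : ℕ => Kpow K (n + 1) x y / Kpow K n x y) atTop (𝓝 ρ) := by
  have hev : ∀ u v, ∀ᶠ n in atTop, 0 < Kpow K n u v := fun u v =>
    eventually_pos_of_tendsto_rpow_inv (fun n => Kpow_nonneg hnn n u v) hρpos (hρ u v)
  obtain ⟨y₀, hy₀⟩ := exists_pos_of_tsum_pos (hπ1.symm ▸ one_pos : 0 < ∑' y, π y)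
  have hmass : ∀ n, 0 ≤ ∑' z, Kpow K n x z := fun n => tsum_nonneg (Kpow_nonneg hnn n x)
  have hdom := eventually_pos_and_mul_le_of_tendsto_div hmass (half_pos hy₀) (half_lt_self hy₀)
    (hyag y₀)
  have hroot := tendsto_rpow_inv_of_tendsto_div hmass (Kpow_nonneg hnn · x y₀) hy₀ (hyag y₀)
    (hρ x y₀)
  have hrow := summable_row_of_tendsto_rpow_inv hnn hev hρpos (half_pos hy₀)
    (hdom.mono fun _ h => h.1) hroot (hdom.mono fun _ h => h.2)
  have hpos : ∀ n, 0 < ∑' z, Kpow K n x z := fun n => by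
    obtain ⟨N, hN, hnN⟩ := (hdom.and (eventually_ge_atTop n)).exists
    exact hN.1.trans_le (antitone_tsum_Kpow hnn hrow hsub x hnN)
  have hratio := tendsto_tsum_Kpow_succ_div hnn hrow hsub hpos hπnn hπ1 hyag
  rw [eq_of_tendsto_succ_div_of_tendsto_rpow_inv (.of_forall hpos) hρpos hroot hratio] at hratio
  exact fun y => tendsto_succ_div_of_tendsto_div
    (pos_of_tendsto_Kpow_div hnn hrow hsub hev hpos hyag hy₀ y).ne' (hyag y) hratio

/-- If an irreducible, aperiodic, substochastic kernel with convergence norm `ρ`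
has a Yaglom limit `π` starting from `x`, then `K^{n+1}(x,y)/K^n(x,y) → ρ` for every `y`. -/
theorem yaglom_pointwise_ratio {S : Type*} [Countable S] (K : S → S → ℝ)
    (hnn : ∀ x y, 0 ≤ K x y)
    (hsub : ∀ x, ∑' y, K x y ≤ 1)
    (hirr : ∀ x y : S, ∃ n, 0 < Kpow K n x y)
    (haper : ∀ x : S, ∀ m : ℕ, (∀ n, 0 < n → 0 < Kpow K n x x → m ∣ n) → m = 1)
    (ρ : ℝ) (hρpos : 0 < ρ) (hρle : ρ ≤ 1)
    (hρ : ∀ x y : S,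
      Tendsto (fun n : ℕ => (Kpow K n x y) ^ ((n : ℝ)⁻¹)) atTop (𝓝 ρ))
    (x : S) (π : S → ℝ) (hπnn : ∀ y, 0 ≤ π y) (hπ1 : ∑' y, π y = 1)
    (hyag : ∀ y : S,
      Tendsto (fun n : ℕ => Kpow K n x y / ∑' z, Kpow K n x z) atTop (𝓝 (π y))) :
    ∀ y : S,
      Tendsto (fun n : ℕ => Kpow K (n + 1) x y / Kpow K n x y) atTop (𝓝 ρ) :=
  yaglom_pointwise_ratio_general K hnn hsub ρ hρpos hρ x π hπnn hπ1 hyag
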